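/- For every prime d ≥ 2 and every n ≥ 1, F_4(d,n) > W_4(d^n), where F_t(d,n) = S(d,n)^{-1} Σ_{k=0}^n binom(n,k)_d d^{(n-k)(n-k+3-2t)/2}, S(d,n) = d^n Π_{j=1}^n (d^j+1), and W_4(D) = 24/((D+3)(D+2)(D+1)D). Hence stabilizer states never form a complex projective 4-design. -/

import Mathlib

/-- The Gaussian binomial coefficient `binom(n,k)_d`. -/
noncomputable def gbinom (d n k : ℕ) : ℚ :=
  if k ≤ n then ∏ i ∈ Finset.range k, ((d : ℚ) ^ (n - i) - 1) / ((d : ℚ) ^ (k - i) - 1)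
  else 0

/-- `S(d,n) = d^n · Π_{j=1}^n (d^j + 1)`, the number of stabilizer states in
dimension `d^n`. -/
def Scard (d n : ℕ) : ℕ := d ^ n * ∏ j ∈ Finset.Icc 1 n, (d ^ j + 1)

/-- The `t`-th frame potential of the stabilizer states in dimension `d^n`:
`F_t(d,n) = S(d,n)⁻¹ Σ_{k=0}^n binom(n,k)_d d^{(n-k)(n-k+3-2t)/2}`. -/
noncomputable def framePot (d t n : ℕ) : ℚ :=
  (Scard d n : ℚ)⁻¹ * ∑ k ∈ Finset.range (n + 1),
    gbinom d n k * (d : ℚ) ^ ((((n : ℤ) - k) * ((n : ℤ) - k + 3 - 2 * t)) / 2)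

/-- The order-4 Welch bound `W_4(D) = binom(D+3,4)⁻¹ = 24/((D+3)(D+2)(D+1)D)`. -/
noncomputable def welch4 (D : ℕ) : ℚ :=
  24 / (((D : ℚ) + 3) * ((D : ℚ) + 2) * ((D : ℚ) + 1) * (D : ℚ))

/-! By the q-binomial theorem `Σₖ binom(n,k)_d d^{binom(n-k,2)} xᵏ = Πᵢ₌₀ⁿ⁻¹ (x + dⁱ)`, the frame
potential has the closed form `F_t(d,n) = S(d,n)⁻¹ Πᵢ₌₀ⁿ⁻¹ (1 + d^{i+2-t})`. For `t = 4` the product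
telescopes against `S(d,n)`, giving, with `D = dⁿ`,
`F_4(d,n) = 2(d+1)(d²+1) / (D(D+1)(D+d)(D+d²))`.
Comparing with `W_4(D) = 24/(D(D+1)(D+2)(D+3))` leaves the polynomial inequality
`12(D+d)(D+d²) < (d+1)(d²+1)(D+2)(D+3)` for `D ≥ d ≥ 2`, whose leading coefficients are `12 < 15`. -/

open Finset

section GaussianBinomial

lemma gbinom_eq_div (d n k : ℕ) :
    gbinom d n k
      = (∏ i ∈ range k, ((d : ℚ) ^ (n - i) - 1)) / ∏ i ∈ range k, ((d : ℚ) ^ (i + 1) - 1) := by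
  have hden : ∏ i ∈ range k, ((d : ℚ) ^ (k - i) - 1) = ∏ i ∈ range k, ((d : ℚ) ^ (i + 1) - 1) := by
    rw [← prod_range_reflect]
    refine prod_congr rfl fun i hi => ?_
    rw [mem_range] at hi
    congr 2
    omega
  unfold gbinom
  split_ifs with hk
  · rw [prod_div_distrib, hden]
  · rw [prod_eq_zero (mem_range.2 (not_le.1 hk)) (by simp), zero_div]

lemma gbinom_zero_right (d n : ℕ) : gbinom d n 0 = 1 := by
  simp [gbinom_eq_div]

lemma gbinom_eq_zero_of_lt {d n k : ℕ} (h : n < k) : gbinom d n k = 0 := by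
  simp [gbinom, not_le.2 h]

lemma gbinom_succ_succ {d : ℕ} (hd : 1 < d) (n k : ℕ) :
    gbinom d (n + 1) (k + 1) = gbinom d n k + (d : ℚ) ^ (k + 1) * gbinom d n (k + 1) := by
  have hq : (1 : ℚ) < d := by exact_mod_cast hd
  have hF : ∏ i ∈ range k, ((d : ℚ) ^ (i + 1) - 1) ≠ 0 :=
    prod_ne_zero_iff.2 fun i _ => sub_ne_zero.2 (one_lt_pow₀ hq i.succ_ne_zero).ne'
  have hk : (d : ℚ) ^ (k + 1) - 1 ≠ 0 := sub_ne_zero.2 (one_lt_pow₀ hq k.succ_ne_zero).ne'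
  have hnum : ∏ i ∈ range (k + 1), ((d : ℚ) ^ (n + 1 - i) - 1)
      = (∏ i ∈ range k, ((d : ℚ) ^ (n - i) - 1)) * ((d : ℚ) ^ (n + 1) - 1) := by
    rw [prod_range_succ']
    simp
  simp only [gbinom_eq_div, hnum, prod_range_succ _ k]
  rcases le_or_gt k n with hkn | hkn
  · have hpow : (d : ℚ) ^ (k + 1) * (d : ℚ) ^ (n - k) = (d : ℚ) ^ (n + 1) := by
      rw [← pow_add]; congr 1; omega
    field_simp
    linear_combination -(∏ i ∈ range k, ((d : ℚ) ^ (n - i) - 1)) * hpow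
  · rw [prod_eq_zero (mem_range.2 hkn) (by simp)]
    simp

lemma choose_two_succ (m : ℕ) : (m + 1).choose 2 = m.choose 2 + m := by
  simp [Nat.choose_succ_succ', add_comm]

theorem prod_add_pow_eq_sum_gbinom {d : ℕ} (hd : 1 < d) (x : ℚ) (n : ℕ) :
    ∏ i ∈ range n, (x + (d : ℚ) ^ i)
      = ∑ k ∈ range (n + 1), gbinom d n k * (d : ℚ) ^ (n - k).choose 2 * x ^ k := by
  induction n with
  | zero => simp [gbinom_zero_right]
  | succ n ih =>
    have hlow : (∑ k ∈ range (n + 1), gbinom d n k * (d : ℚ) ^ (n - k).choose 2 * x ^ k) * (d : ℚ) ^ n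
        = ∑ k ∈ range (n + 1),
            (d : ℚ) ^ (k + 1) * gbinom d n (k + 1) * (d : ℚ) ^ (n - k).choose 2 * x ^ (k + 1)
          + (d : ℚ) ^ (n + 1).choose 2 := by
      rw [sum_range_succ', sum_range_succ _ n, gbinom_eq_zero_of_lt n.lt_succ_self, mul_zero,
        zero_mul, zero_mul, add_zero, add_mul, sum_mul, gbinom_zero_right, choose_two_succ]
      congr 1
      · refine sum_congr rfl fun k hk => ?_
        obtain ⟨m, rfl⟩ : ∃ m, n = k + 1 + m := ⟨n - (k + 1), by rw [mem_range] at hk; omega⟩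
        rw [show k + 1 + m - (k + 1) = m by omega, show k + 1 + m - k = m + 1 by omega,
          choose_two_succ]
        ring
      · simp [pow_add, mul_comm]
    rw [prod_range_succ, ih, mul_add, sum_mul, hlow, sum_range_succ' _ (n + 1), gbinom_zero_right]
    simp only [gbinom_succ_succ hd, Nat.add_sub_add_right]
    rw [← add_assoc, ← sum_add_distrib]
    congr 1
    · refine sum_congr rfl fun k _ => ?_
      ring
    · simp

end GaussianBinomial

section FramePotential

lemma two_mul_choose_two (m : ℕ) : 2 * (m.choose 2 : ℤ) = m * (m - 1) := by
  induction m with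
  | zero => simp
  | succ m ih =>
    rw [choose_two_succ]
    push_cast
    linear_combination ih

lemma mul_add_three_sub_two_mul_ediv_two (m t : ℕ) :
    (m : ℤ) * (m + 3 - 2 * t) / 2 = m.choose 2 + (2 - t) * m := by
  rw [show (m : ℤ) * (m + 3 - 2 * t) = 2 * (m.choose 2 + (2 - t) * m) by
    linear_combination -two_mul_choose_two m]
  exact Int.mul_ediv_cancel_left _ two_ne_zero

theorem framePot_eq_prod {d : ℕ} (hd : 1 < d) (t n : ℕ) :
    framePot d t n = (Scard d n : ℚ)⁻¹ * ∏ i ∈ range n, (1 + (d : ℚ) ^ ((i : ℤ) + 2 - t)) := by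
  have hq : (d : ℚ) ≠ 0 := by positivity
  set x : ℚ := (d : ℚ) ^ ((t : ℤ) - 2) with hx
  have hterm : ∀ k ∈ range (n + 1),
      gbinom d n k * (d : ℚ) ^ ((((n : ℤ) - k) * ((n : ℤ) - k + 3 - 2 * t)) / 2)
        = (x ^ n)⁻¹ * (gbinom d n k * (d : ℚ) ^ (n - k).choose 2 * x ^ k) := by
    intro k hk
    have hkn : k ≤ n := Nat.lt_succ_iff.1 (mem_range.1 hk)
    rw [← Nat.cast_sub hkn, mul_add_three_sub_two_mul_ediv_two, Nat.cast_sub hkn, hx,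
      ← zpow_natCast, ← zpow_natCast, ← zpow_natCast, ← zpow_mul, ← zpow_mul, ← zpow_neg,
      mul_left_comm, mul_comm (_ ^ _ : ℚ), mul_assoc, ← zpow_add₀ hq, ← zpow_add₀ hq]
    congr 2
    ring
  have hfactor : ∀ i : ℕ, x⁻¹ * (x + (d : ℚ) ^ i) = 1 + (d : ℚ) ^ ((i : ℤ) + 2 - t) := by
    intro i
    rw [mul_add, inv_mul_cancel₀ (by positivity), hx, ← zpow_natCast, ← zpow_neg, ← zpow_add₀ hq]
    ring_nf
  rw [framePot, sum_congr rfl hterm, ← mul_sum, ← prod_add_pow_eq_sum_gbinom hd, ← inv_pow,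
    show x⁻¹ ^ n = ∏ _i ∈ range n, x⁻¹ by simp, ← prod_mul_distrib]
  simp only [hfactor]

lemma prod_one_add_zpow_sub_two_mul {K : Type*} [Field K] {q : K} (hq : q ≠ 0) (n : ℕ) :
    (∏ i ∈ range n, (1 + q ^ ((i : ℤ) - 2))) * ((q ^ n + 1) * (q ^ n + q) * (q ^ n + q ^ 2))
      = 2 * (q + 1) * (q ^ 2 + 1) * ∏ j ∈ Icc 1 n, (q ^ j + 1) := by
  induction n with
  | zero =>
    rw [prod_range_zero, Icc_eq_empty (by omega), prod_empty]
    ring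
  | succ n ih =>
    have hy : q ^ n = q ^ ((n : ℤ) - 2) * q ^ 2 := by
      rw [← zpow_natCast, ← zpow_natCast, ← zpow_add₀ hq]; ring_nf
    rw [prod_range_succ, prod_Icc_succ_top (Nat.le_add_left 1 n), pow_succ, hy]
    rw [hy] at ih
    linear_combination (q ^ ((n : ℤ) - 2) * q ^ 2 * q + 1) * ih

theorem framePot_four_eq {d : ℕ} (hd : 1 < d) (n : ℕ) :
    framePot d 4 n = 2 * ((d : ℚ) + 1) * ((d : ℚ) ^ 2 + 1)
      / ((d : ℚ) ^ n * ((d : ℚ) ^ n + 1) * ((d : ℚ) ^ n + d) * ((d : ℚ) ^ n + (d : ℚ) ^ 2)) := by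
  have hq : (d : ℚ) ≠ 0 := by positivity
  have hS : (Scard d n : ℚ) = (d : ℚ) ^ n * ∏ j ∈ Icc 1 n, ((d : ℚ) ^ j + 1) := by
    simp [Scard]
  have hexp : ∀ i : ℕ, (i : ℤ) + 2 - ((4 : ℕ) : ℤ) = i - 2 := fun i => by push_cast; ring
  rw [framePot_eq_prod hd, hS]
  simp only [hexp]
  rw [eq_div_iff (by positivity)]
  field_simp
  linear_combination prod_one_add_zpow_sub_two_mul hq n

end FramePotential

lemma twelve_mul_lt_of_two_le_of_le {q D : ℚ} (hq : 2 ≤ q) (hD : q ≤ D) :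
    12 * ((D + q) * (D + q ^ 2)) < (q + 1) * (q ^ 2 + 1) * ((D + 2) * (D + 3)) := by
  obtain ⟨a, ha, rfl⟩ : ∃ a, 0 ≤ a ∧ q = 2 + a := ⟨q - 2, by linarith, by ring⟩
  obtain ⟨b, hb, rfl⟩ : ∃ b, 0 ≤ b ∧ D = 2 + a + b := ⟨D - (2 + a), by linarith, by ring⟩
  -- in the variables `a = q - 2`, `b = D - q` every coefficient of the difference is positive
  rw [← sub_pos]
  ring_nf
  positivity

theorem welch4_lt_framePot_four {d n : ℕ} (hd : 1 < d) (hn : n ≠ 0) :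
    welch4 (d ^ n) < framePot d 4 n := by
  have hq : (2 : ℚ) ≤ d := by exact_mod_cast hd
  have hD : (d : ℚ) ≤ (d : ℚ) ^ n := le_self_pow₀ (by linarith) hn
  have hD0 : (0 : ℚ) < (d : ℚ) ^ n := by positivity
  rw [framePot_four_eq hd, welch4, Nat.cast_pow, div_lt_div_iff₀ (by positivity) (by positivity)]
  have := mul_lt_mul_of_pos_right (twelve_mul_lt_of_two_le_of_le hq hD)
    (by positivity : 0 < 2 * (d : ℚ) ^ n * ((d : ℚ) ^ n + 1))
  linarith

/-- **Stabilizer states never form 4-designs.** For every prime `d ≥ 2` and every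
`n ≥ 1`, the frame potential strictly exceeds the order-4 Welch bound:
`F_4(d,n) > W_4(d^n)`. -/
theorem stab_not_four_design (d n : ℕ) (hd : d.Prime) (hn : 1 ≤ n) :
    welch4 (d ^ n) < framePot d 4 n :=
  welch4_lt_framePot_four hd.one_lt (Nat.one_le_iff_ne_zero.1 hn)
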